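/- (Soundness and completeness of the modified base-extension semantics for IPL) For every finite set Γ of IPL formulas and every IPL formula φ: Γ ⊩* φ (i.e. Γ ⊩*_B φ for every base B) if and only if Γ ⊢ φ in intuitionistic propositional logic. -/
import Mathlib


/-- Formulas of intuitionistic propositional logic over a denumerable
set of atoms (here: `ℕ`). -/
inductive IPLForm : Type where
  | atom : ℕ → IPLForm
  | and : IPLForm → IPLForm → IPLForm
  | or : IPLForm → IPLForm → IPLForm
  | imp : IPLForm → IPLForm → IPLForm
  | bot : IPLForm
deriving DecidableEq

/-- A (second-level) atomic rule `(Q₁ ▷ q₁, …, Qₙ ▷ qₙ) ⇒ q`;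
an axiom `⇒ q` is the case `prems = []`. -/
structure IPLRule : Type where
  prems : List (Finset ℕ × ℕ)
  concl : ℕ

/-- A base is a set of atomic rules. -/
abbrev IPLBase := Set IPLRule

/-- Derivability in a base `B`: `S ⊢_B q`. -/
inductive IPLDer (B : IPLBase) : Finset ℕ → ℕ → Prop where
  | ref {S : Finset ℕ} {q : ℕ} : q ∈ S → IPLDer B S q
  | app {S : Finset ℕ} {r : IPLRule} :
      r ∈ B → (∀ pr ∈ r.prems, IPLDer B (S ∪ pr.1) pr.2) →
      IPLDer B S r.concl

/-- Sandqvist's support relation `⊩_B φ`. -/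
def Supp : IPLForm → IPLBase → Prop
  | .atom p, B => IPLDer B ∅ p
  | .and φ ψ, B => Supp φ B ∧ Supp ψ B
  | .or φ ψ, B => ∀ C : IPLBase, B ⊆ C → ∀ p : ℕ,
      (∀ D : IPLBase, C ⊆ D → Supp φ D → IPLDer D ∅ p) →
      (∀ D : IPLBase, C ⊆ D → Supp ψ D → IPLDer D ∅ p) →
      IPLDer C ∅ p
  | .imp φ ψ, B => ∀ C : IPLBase, B ⊆ C → Supp φ C → Supp ψ C
  | .bot, B => ∀ p : ℕ, IPLDer B ∅ p

/-- Support of a formula relative to a context (finite set of formulas):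
`Γ ⊩_B φ`. -/
def SuppCtx (Γ : Finset IPLForm) (B : IPLBase) (φ : IPLForm) : Prop :=
  ∀ C : IPLBase, B ⊆ C → (∀ ψ ∈ Γ, Supp ψ C) → Supp φ C

/-- The modified support relation `⊩*_B φ`, in which the clause for `∧`
takes the form of the generalized elimination rule. -/
def Supp' : IPLForm → IPLBase → Prop
  | .atom p, B => IPLDer B ∅ p
  | .and φ ψ, B => ∀ C : IPLBase, B ⊆ C → ∀ p : ℕ,
      (∀ D : IPLBase, C ⊆ D → Supp' φ D → Supp' ψ D → IPLDer D ∅ p) →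
      IPLDer C ∅ p
  | .or φ ψ, B => ∀ C : IPLBase, B ⊆ C → ∀ p : ℕ,
      (∀ D : IPLBase, C ⊆ D → Supp' φ D → IPLDer D ∅ p) →
      (∀ D : IPLBase, C ⊆ D → Supp' ψ D → IPLDer D ∅ p) →
      IPLDer C ∅ p
  | .imp φ ψ, B => ∀ C : IPLBase, B ⊆ C → Supp' φ C → Supp' ψ C
  | .bot, B => ∀ p : ℕ, IPLDer B ∅ p

/-- Support relative to a context for the modified semantics: `Γ ⊩*_B φ`. -/
def SuppCtx' (Γ : Finset IPLForm) (B : IPLBase) (φ : IPLForm) : Prop :=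
  ∀ C : IPLBase, B ⊆ C → (∀ ψ ∈ Γ, Supp' ψ C) → Supp' φ C

/-- Gentzen's natural deduction system NJ for IPL, with finite sets as
contexts: `Γ ⊢ φ`. -/
inductive NJ : Finset IPLForm → IPLForm → Prop where
  | ax {Γ : Finset IPLForm} {φ : IPLForm} : φ ∈ Γ → NJ Γ φ
  | andI {Γ φ ψ} : NJ Γ φ → NJ Γ ψ → NJ Γ (.and φ ψ)
  | andE1 {Γ φ ψ} : NJ Γ (.and φ ψ) → NJ Γ φ
  | andE2 {Γ φ ψ} : NJ Γ (.and φ ψ) → NJ Γ ψ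
  | orI1 {Γ φ ψ} : NJ Γ φ → NJ Γ (.or φ ψ)
  | orI2 {Γ φ ψ} : NJ Γ ψ → NJ Γ (.or φ ψ)
  | orE {Γ φ ψ χ} : NJ Γ (.or φ ψ) → NJ (insert φ Γ) χ → NJ (insert ψ Γ) χ → NJ Γ χ
  | impI {Γ φ ψ} : NJ (insert φ Γ) ψ → NJ Γ (.imp φ ψ)
  | impE {Γ φ ψ} : NJ Γ (.imp φ ψ) → NJ Γ φ → NJ Γ ψ
  | botE {Γ φ} : NJ Γ .bot → NJ Γ φ

/-! ### Auxiliary development -/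

open IPLForm

section Basic

lemma der_mono_base {B C : IPLBase} (h : B ⊆ C) {S : Finset ℕ} {q : ℕ}
    (hd : IPLDer B S q) : IPLDer C S q := by
  induction hd with
  | ref hq => exact .ref hq
  | app hr _ ih => exact .app (h hr) ih

lemma der_mono_ctx {B : IPLBase} {S : Finset ℕ} {q : ℕ} (h : IPLDer B S q) :
    ∀ {S' : Finset ℕ}, S ⊆ S' → IPLDer B S' q := by
  induction h with
  | ref hq => exact fun hs => .ref (hs hq)
  | app hr _ ih =>
    exact fun hs => .app hr fun pr hpr => ih pr hpr (Finset.union_subset_union_left hs)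

/-- The base consisting of axiom rules `⇒ q` for each `q ∈ T`. -/
def axSet (T : Finset ℕ) : IPLBase := { r | r.prems = [] ∧ r.concl ∈ T }

lemma der_ax {B : IPLBase} {T : Finset ℕ} {q : ℕ} (h : q ∈ T) {S : Finset ℕ} :
    IPLDer (B ∪ axSet T) S q :=
  IPLDer.app (r := ⟨[], q⟩) (Set.mem_union_right B ⟨rfl, h⟩)
    (fun pr hpr => by simp at hpr)

lemma der_discharge {B : IPLBase} {T : Finset ℕ} {S : Finset ℕ} {q : ℕ}
    (h : IPLDer (B ∪ axSet T) S q) : IPLDer B (S ∪ T) q := by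
  induction h with
  | ref hq => exact .ref (Finset.mem_union_left _ hq)
  | app hr _ ih =>
    rcases hr with hr | hr
    · refine .app hr fun pr hpr => ?_
      have h2 := ih pr hpr
      rwa [Finset.union_right_comm] at h2
    · rcases hr with ⟨_, hconcl⟩
      exact .ref (Finset.mem_union_right _ hconcl)

lemma supp'_mono : ∀ (χ : IPLForm) {B C : IPLBase}, B ⊆ C → Supp' χ B → Supp' χ C
  | .atom _, _, _, h, hs => der_mono_base h hs
  | .and _ _, _, _, h, hs => fun C' hCC' => hs C' (h.trans hCC')
  | .or _ _, _, _, h, hs => fun C' hCC' => hs C' (h.trans hCC')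
  | .imp _ _, _, _, h, hs => fun C' hCC' => hs C' (h.trans hCC')
  | .bot, _, _, h, hs => fun p => der_mono_base h (hs p)

/-- Key "expansion" lemma: a formula is supported whenever it behaves like a
supported formula at the level of atoms over all extensions. -/
lemma supp'_ofE : ∀ (χ : IPLForm) (C : IPLBase),
    (∀ C', C ⊆ C' → ∀ p : ℕ,
      (∀ D, C' ⊆ D → Supp' χ D → IPLDer D ∅ p) → IPLDer C' ∅ p) →
    Supp' χ C
  | .atom n, C, h => h C subset_rfl n (fun _ _ hD => hD)
  | .bot, C, h => fun p => h C subset_rfl p (fun _ _ hD => hD p)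
  | .and a b, C, h => fun C' hCC' p hin =>
      h C' hCC' p (fun D hD hab =>
        hab D subset_rfl p (fun E hDE ha hb => hin E (hD.trans hDE) ha hb))
  | .or a b, C, h => fun C' hCC' p h1 h2 =>
      h C' hCC' p (fun D hD hor =>
        hor D subset_rfl p (fun E hDE ha => h1 E (hD.trans hDE) ha)
          (fun E hDE hb => h2 E (hD.trans hDE) hb))
  | .imp a b, C, h => fun C' hCC' ha =>
      supp'_ofE b C' (fun C'' h2 p hb =>
        h C'' (hCC'.trans h2) p (fun D hD hab =>
          hb D hD (hab D subset_rfl (supp'_mono a (h2.trans hD) ha))))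

end Basic

section Soundness

lemma nj_sound {Γ : Finset IPLForm} {φ : IPLForm} (h : NJ Γ φ) :
    ∀ C : IPLBase, (∀ ψ ∈ Γ, Supp' ψ C) → Supp' φ C := by
  induction h with
  | ax hm => exact fun C hC => hC _ hm
  | andI _ _ ih1 ih2 =>
    intro C hC C' hCC' p hin
    exact hin C' subset_rfl
      (ih1 C' fun ψ hψ => supp'_mono ψ hCC' (hC ψ hψ))
      (ih2 C' fun ψ hψ => supp'_mono ψ hCC' (hC ψ hψ))
  | andE1 _ ih =>
    intro C hC
    refine supp'_ofE _ _ (fun C' hCC' p hp => ?_)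
    exact ih C hC C' hCC' p (fun D hD ha _ => hp D hD ha)
  | andE2 _ ih =>
    intro C hC
    refine supp'_ofE _ _ (fun C' hCC' p hp => ?_)
    exact ih C hC C' hCC' p (fun D hD _ hb => hp D hD hb)
  | orI1 _ ih =>
    intro C hC C' hCC' p h1 _
    exact h1 C' subset_rfl (supp'_mono _ hCC' (ih C hC))
  | orI2 _ ih =>
    intro C hC C' hCC' p _ h2
    exact h2 C' subset_rfl (supp'_mono _ hCC' (ih C hC))
  | orE _ _ _ ihor ih1 ih2 =>
    intro C hC
    refine supp'_ofE _ _ (fun C' hCC' p hp => ?_)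
    refine ihor C hC C' hCC' p ?_ ?_
    · intro D hD ha
      refine hp D hD (ih1 D (fun ψ hψ => ?_))
      rcases Finset.mem_insert.1 hψ with rfl | hψ
      · exact ha
      · exact supp'_mono _ (hCC'.trans hD) (hC ψ hψ)
    · intro D hD hb
      refine hp D hD (ih2 D (fun ψ hψ => ?_))
      rcases Finset.mem_insert.1 hψ with rfl | hψ
      · exact hb
      · exact supp'_mono _ (hCC'.trans hD) (hC ψ hψ)
  | impI _ ih =>
    intro C hC C' hCC' ha
    refine ih C' (fun ψ hψ => ?_)
    rcases Finset.mem_insert.1 hψ with rfl | hψ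
    · exact ha
    · exact supp'_mono _ hCC' (hC ψ hψ)
  | impE _ _ ih1 ih2 =>
    intro C hC
    exact ih1 C hC C subset_rfl (ih2 C hC)
  | botE _ ih =>
    intro C hC
    refine supp'_ofE _ _ (fun C' hCC' p _ => ?_)
    exact supp'_mono .bot hCC' (ih C hC) p

end Soundness
section Completeness

/-- NJ weakening. -/
lemma nj_weaken {Γ : Finset IPLForm} {χ : IPLForm} (h : NJ Γ χ) :
    ∀ {Γ' : Finset IPLForm}, Γ ⊆ Γ' → NJ Γ' χ := by
  induction h with
  | ax h => exact fun hs => .ax (hs h)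
  | andI _ _ ih1 ih2 => exact fun hs => .andI (ih1 hs) (ih2 hs)
  | andE1 _ ih => exact fun hs => .andE1 (ih hs)
  | andE2 _ ih => exact fun hs => .andE2 (ih hs)
  | orI1 _ ih => exact fun hs => .orI1 (ih hs)
  | orI2 _ ih => exact fun hs => .orI2 (ih hs)
  | orE _ _ _ ih ih1 ih2 =>
    exact fun hs => .orE (ih hs) (ih1 (Finset.insert_subset_insert _ hs))
      (ih2 (Finset.insert_subset_insert _ hs))
  | impI _ ih => exact fun hs => .impI (ih (Finset.insert_subset_insert _ hs))
  | impE _ _ ih1 ih2 => exact fun hs => .impE (ih1 hs) (ih2 hs)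
  | botE _ ih => exact fun hs => .botE (ih hs)

lemma nj_cut {Γ : Finset IPLForm} {α χ : IPLForm} (ha : NJ Γ α)
    (h : NJ (insert α Γ) χ) : NJ Γ χ :=
  .impE (.impI h) ha

/-- Closure of a finite set of formulas under immediate subformulas. -/
def Closed (sub : Finset IPLForm) : Prop :=
  (∀ a b : IPLForm, IPLForm.and a b ∈ sub → a ∈ sub ∧ b ∈ sub) ∧
  (∀ a b : IPLForm, IPLForm.or a b ∈ sub → a ∈ sub ∧ b ∈ sub) ∧
  (∀ a b : IPLForm, IPLForm.imp a b ∈ sub → a ∈ sub ∧ b ∈ sub)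

/-- The simulation base: for every composite formula in `sub`, atomic rules
mirroring the natural-deduction introduction and elimination rules, on the
atomic images under `f`. -/
def NBase (sub : Finset IPLForm) (f : IPLForm → ℕ) : IPLBase :=
  { r | (∃ a b, IPLForm.and a b ∈ sub ∧ r = ⟨[(∅, f a), (∅, f b)], f (.and a b)⟩)
      ∨ (∃ a b p, IPLForm.and a b ∈ sub ∧ r = ⟨[(∅, f (.and a b)), ({f a, f b}, p)], p⟩)
      ∨ (∃ a b, IPLForm.or a b ∈ sub ∧ r = ⟨[(∅, f a)], f (.or a b)⟩)
      ∨ (∃ a b, IPLForm.or a b ∈ sub ∧ r = ⟨[(∅, f b)], f (.or a b)⟩)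
      ∨ (∃ a b p, IPLForm.or a b ∈ sub ∧ r = ⟨[(∅, f (.or a b)), ({f a}, p), ({f b}, p)], p⟩)
      ∨ (∃ a b, IPLForm.imp a b ∈ sub ∧ r = ⟨[({f a}, f b)], f (.imp a b)⟩)
      ∨ (∃ a b, IPLForm.imp a b ∈ sub ∧ r = ⟨[(∅, f (.imp a b)), (∅, f a)], f b⟩)
      ∨ (∃ p, IPLForm.bot ∈ sub ∧ r = ⟨[(∅, f .bot)], p⟩) }

/-- Lemma (a): over any extension of the simulation base, support of a
formula in `sub` coincides with derivability of its atomic image. -/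
lemma lemA (sub : Finset IPLForm) (hcl : Closed sub) (f : IPLForm → ℕ)
    (hatom : ∀ n, f (.atom n) = n) :
    ∀ ξ, ξ ∈ sub → ∀ C : IPLBase, NBase sub f ⊆ C →
      (Supp' ξ C ↔ IPLDer C ∅ (f ξ)) := by
  intro ξ
  induction ξ with
  | atom n =>
    intro _ C _
    rw [hatom]
    exact Iff.rfl
  | and a b iha ihb =>
    intro hmem C hNC
    have ha := (hcl.1 a b hmem).1
    have hb := (hcl.1 a b hmem).2
    constructor
    · intro hs
      refine hs C subset_rfl (f (a.and b)) ?_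
      intro D hCD hsa hsb
      have da := (iha ha D (hNC.trans hCD)).1 hsa
      have db := (ihb hb D (hNC.trans hCD)).1 hsb
      refine IPLDer.app (r := ⟨[(∅, f a), (∅, f b)], f (.and a b)⟩)
        (hNC.trans hCD (Or.inl ⟨a, b, hmem, rfl⟩)) ?_
      intro pr hpr
      simp only [List.mem_cons, List.mem_singleton, List.not_mem_nil, or_false] at hpr
      rcases hpr with rfl | rfl
      · simpa using da
      · simpa using db
    · intro hd C' hCC' p hin
      have hND : NBase sub f ⊆ C' ∪ axSet {f a, f b} :=
        (hNC.trans hCC').trans Set.subset_union_left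
      have hsa : Supp' a (C' ∪ axSet {f a, f b}) :=
        (iha ha _ hND).2 (der_ax (by simp))
      have hsb : Supp' b (C' ∪ axSet {f a, f b}) :=
        (ihb hb _ hND).2 (der_ax (by simp))
      have hdp := der_discharge (hin _ Set.subset_union_left hsa hsb)
      rw [Finset.empty_union] at hdp
      refine IPLDer.app (r := ⟨[(∅, f (.and a b)), ({f a, f b}, p)], p⟩)
        (hNC.trans hCC' (Or.inr (Or.inl ⟨a, b, p, hmem, rfl⟩))) ?_
      intro pr hpr
      simp only [List.mem_cons, List.mem_singleton, List.not_mem_nil, or_false] at hpr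
      rcases hpr with rfl | rfl
      · simpa using der_mono_base hCC' hd
      · simpa using hdp
  | or a b iha ihb =>
    intro hmem C hNC
    have ha := (hcl.2.1 a b hmem).1
    have hb := (hcl.2.1 a b hmem).2
    constructor
    · intro hs
      refine hs C subset_rfl (f (a.or b)) ?_ ?_
      · intro D hCD hsa
        have da := (iha ha D (hNC.trans hCD)).1 hsa
        refine IPLDer.app (r := ⟨[(∅, f a)], f (.or a b)⟩)
          (hNC.trans hCD (Or.inr (Or.inr (Or.inl ⟨a, b, hmem, rfl⟩)))) ?_
        intro pr hpr
        simp only [List.mem_singleton, List.mem_cons, List.not_mem_nil, or_false] at hpr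
        subst hpr
        simpa using da
      · intro D hCD hsb
        have db := (ihb hb D (hNC.trans hCD)).1 hsb
        refine IPLDer.app (r := ⟨[(∅, f b)], f (.or a b)⟩)
          (hNC.trans hCD (Or.inr (Or.inr (Or.inr (Or.inl ⟨a, b, hmem, rfl⟩))))) ?_
        intro pr hpr
        simp only [List.mem_singleton, List.mem_cons, List.not_mem_nil, or_false] at hpr
        subst hpr
        simpa using db
    · intro hd C' hCC' p h1 h2
      have hNDa : NBase sub f ⊆ C' ∪ axSet {f a} :=
        (hNC.trans hCC').trans Set.subset_union_left
      have hNDb : NBase sub f ⊆ C' ∪ axSet {f b} :=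
        (hNC.trans hCC').trans Set.subset_union_left
      have hsa : Supp' a (C' ∪ axSet {f a}) := (iha ha _ hNDa).2 (der_ax (by simp))
      have hsb : Supp' b (C' ∪ axSet {f b}) := (ihb hb _ hNDb).2 (der_ax (by simp))
      have hdp1 := der_discharge (h1 _ Set.subset_union_left hsa)
      have hdp2 := der_discharge (h2 _ Set.subset_union_left hsb)
      rw [Finset.empty_union] at hdp1 hdp2
      refine IPLDer.app (r := ⟨[(∅, f (.or a b)), ({f a}, p), ({f b}, p)], p⟩)
        (hNC.trans hCC'
          (Or.inr (Or.inr (Or.inr (Or.inr (Or.inl ⟨a, b, p, hmem, rfl⟩)))))) ?_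
      intro pr hpr
      simp only [List.mem_cons, List.mem_singleton, List.not_mem_nil, or_false] at hpr
      rcases hpr with rfl | rfl | rfl
      · simpa using der_mono_base hCC' hd
      · simpa using hdp1
      · simpa using hdp2
  | imp a b iha ihb =>
    intro hmem C hNC
    have ha := (hcl.2.2 a b hmem).1
    have hb := (hcl.2.2 a b hmem).2
    constructor
    · intro hs
      have hND : NBase sub f ⊆ C ∪ axSet {f a} := hNC.trans Set.subset_union_left
      have hsa : Supp' a (C ∪ axSet {f a}) := (iha ha _ hND).2 (der_ax (by simp))
      have hsb : Supp' b (C ∪ axSet {f a}) := hs _ Set.subset_union_left hsa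
      have hdb := der_discharge ((ihb hb _ hND).1 hsb)
      rw [Finset.empty_union] at hdb
      refine IPLDer.app (r := ⟨[({f a}, f b)], f (.imp a b)⟩)
        (hNC (Or.inr (Or.inr (Or.inr (Or.inr (Or.inr (Or.inl ⟨a, b, hmem, rfl⟩))))))) ?_
      intro pr hpr
      simp only [List.mem_singleton, List.mem_cons, List.not_mem_nil, or_false] at hpr
      subst hpr
      simpa using hdb
    · intro hd C' hCC' hsa
      have hda := (iha ha C' (hNC.trans hCC')).1 hsa
      have hdb : IPLDer C' ∅ (f b) := by
        refine IPLDer.app (r := ⟨[(∅, f (.imp a b)), (∅, f a)], f b⟩)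
          (hNC.trans hCC'
            (Or.inr (Or.inr (Or.inr (Or.inr (Or.inr (Or.inr
              (Or.inl ⟨a, b, hmem, rfl⟩)))))))) ?_
        intro pr hpr
        simp only [List.mem_cons, List.mem_singleton, List.not_mem_nil, or_false] at hpr
        rcases hpr with rfl | rfl
        · simpa using der_mono_base hCC' hd
        · simpa using hda
      exact (ihb hb C' (hNC.trans hCC')).2 hdb
  | bot =>
    intro hmem C hNC
    constructor
    · intro hs
      exact hs (f .bot)
    · intro hd p
      refine IPLDer.app (r := ⟨[(∅, f .bot)], p⟩)
        (hNC (Or.inr (Or.inr (Or.inr (Or.inr (Or.inr (Or.inr (Or.inr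
          ⟨p, hmem, rfl⟩)))))))) ?_
      intro pr hpr
      simp only [List.mem_singleton, List.mem_cons, List.not_mem_nil, or_false] at hpr
      subst hpr
      simpa using hd

/-- Lemma (b): atomic derivability in the simulation base translates back
to NJ derivability via the decoding `g`. -/
lemma lemB (sub : Finset IPLForm) (hcl : Closed sub) (f : IPLForm → ℕ)
    (g : ℕ → IPLForm) (hg : ∀ ξ ∈ sub, g (f ξ) = ξ) :
    ∀ {S : Finset ℕ} {q : ℕ}, IPLDer (NBase sub f) S q → NJ (S.image g) (g q) := by
  intro S q h
  induction h with
  | ref hq => exact .ax (Finset.mem_image_of_mem g hq)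
  | app hr hp ih =>
    rename_i S r
    rcases hr with ⟨a, b, hab, rfl⟩ | ⟨a, b, p, hab, rfl⟩ | ⟨a, b, hab, rfl⟩ |
      ⟨a, b, hab, rfl⟩ | ⟨a, b, p, hab, rfl⟩ | ⟨a, b, hab, rfl⟩ |
      ⟨a, b, hab, rfl⟩ | ⟨p, hbot, rfl⟩
    · -- and-introduction
      have h1 := ih (∅, f a) (by simp)
      have h2 := ih (∅, f b) (by simp)
      rw [Finset.union_empty, hg _ (hcl.1 a b hab).1] at h1
      rw [Finset.union_empty, hg _ (hcl.1 a b hab).2] at h2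
      show NJ (S.image g) (g (f (a.and b)))
      rw [hg _ hab]
      exact .andI h1 h2
    · -- and-elimination
      have h1 := ih (∅, f (a.and b)) (by simp)
      have h2 := ih ({f a, f b}, p) (by simp)
      rw [Finset.union_empty, hg _ hab] at h1
      have himg : (S ∪ ({f a, f b} : Finset ℕ)).image g
          = insert a (insert b (S.image g)) := by
        rw [Finset.image_union, Finset.image_insert, Finset.image_singleton,
          hg _ (hcl.1 a b hab).1, hg _ (hcl.1 a b hab).2]
        ext x
        simp only [Finset.mem_union, Finset.mem_insert, Finset.mem_singleton]
        tauto
      rw [himg] at h2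
      have h3 : NJ (insert b (S.image g)) (g p) :=
        nj_cut (nj_weaken (.andE1 h1) (Finset.subset_insert _ _)) h2
      exact nj_cut (.andE2 h1) h3
    · -- or-introduction left
      have h1 := ih (∅, f a) (by simp)
      rw [Finset.union_empty, hg _ (hcl.2.1 a b hab).1] at h1
      show NJ (S.image g) (g (f (a.or b)))
      rw [hg _ hab]
      exact .orI1 h1
    · -- or-introduction right
      have h1 := ih (∅, f b) (by simp)
      rw [Finset.union_empty, hg _ (hcl.2.1 a b hab).2] at h1
      show NJ (S.image g) (g (f (a.or b)))
      rw [hg _ hab]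
      exact .orI2 h1
    · -- or-elimination
      have h1 := ih (∅, f (a.or b)) (by simp)
      have h2 := ih ({f a}, p) (by simp)
      have h3 := ih ({f b}, p) (by simp)
      rw [Finset.union_empty, hg _ hab] at h1
      have himga : (S ∪ ({f a} : Finset ℕ)).image g = insert a (S.image g) := by
        rw [Finset.image_union, Finset.image_singleton, hg _ (hcl.2.1 a b hab).1,
          Finset.union_comm, ← Finset.insert_eq]
      have himgb : (S ∪ ({f b} : Finset ℕ)).image g = insert b (S.image g) := by
        rw [Finset.image_union, Finset.image_singleton, hg _ (hcl.2.1 a b hab).2,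
          Finset.union_comm, ← Finset.insert_eq]
      rw [himga] at h2
      rw [himgb] at h3
      exact .orE h1 h2 h3
    · -- imp-introduction
      have h1 := ih ({f a}, f b) (by simp)
      have himga : (S ∪ ({f a} : Finset ℕ)).image g = insert a (S.image g) := by
        rw [Finset.image_union, Finset.image_singleton, hg _ (hcl.2.2 a b hab).1,
          Finset.union_comm, ← Finset.insert_eq]
      rw [himga, hg _ (hcl.2.2 a b hab).2] at h1
      show NJ (S.image g) (g (f (a.imp b)))
      rw [hg _ hab]
      exact .impI h1
    · -- imp-elimination
      have h1 := ih (∅, f (a.imp b)) (by simp)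
      have h2 := ih (∅, f a) (by simp)
      rw [Finset.union_empty, hg _ hab] at h1
      rw [Finset.union_empty, hg _ (hcl.2.2 a b hab).1] at h2
      show NJ (S.image g) (g (f b))
      rw [hg _ (hcl.2.2 a b hab).2]
      exact .impE h1 h2
    · -- bot-elimination
      have h1 := ih (∅, f .bot) (by simp)
      rw [Finset.union_empty, hg _ hbot] at h1
      exact .botE h1

end Completeness
section Encoding

/-- Subformulas of a formula. -/
def subfm : IPLForm → Finset IPLForm
  | .atom n => {.atom n}
  | .and a b => insert (.and a b) (subfm a ∪ subfm b)
  | .or a b => insert (.or a b) (subfm a ∪ subfm b)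
  | .imp a b => insert (.imp a b) (subfm a ∪ subfm b)
  | .bot => {.bot}

lemma mem_subfm_self (ξ : IPLForm) : ξ ∈ subfm ξ := by
  cases ξ <;> simp [subfm]

lemma subfm_subset {χ ξ : IPLForm} (h : χ ∈ subfm ξ) : subfm χ ⊆ subfm ξ := by
  induction ξ with
  | atom n =>
    simp only [subfm, Finset.mem_singleton] at h
    subst h; exact subset_rfl
  | bot =>
    simp only [subfm, Finset.mem_singleton] at h
    subst h; exact subset_rfl
  | and a b iha ihb =>
    rcases Finset.mem_insert.1 h with rfl | h2
    · exact subset_rfl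
    · rcases Finset.mem_union.1 h2 with h3 | h3
      · exact (iha h3).trans ((Finset.subset_union_left).trans (Finset.subset_insert _ _))
      · exact (ihb h3).trans ((Finset.subset_union_right).trans (Finset.subset_insert _ _))
  | or a b iha ihb =>
    rcases Finset.mem_insert.1 h with rfl | h2
    · exact subset_rfl
    · rcases Finset.mem_union.1 h2 with h3 | h3
      · exact (iha h3).trans ((Finset.subset_union_left).trans (Finset.subset_insert _ _))
      · exact (ihb h3).trans ((Finset.subset_union_right).trans (Finset.subset_insert _ _))
  | imp a b iha ihb =>
    rcases Finset.mem_insert.1 h with rfl | h2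
    · exact subset_rfl
    · rcases Finset.mem_union.1 h2 with h3 | h3
      · exact (iha h3).trans ((Finset.subset_union_left).trans (Finset.subset_insert _ _))
      · exact (ihb h3).trans ((Finset.subset_union_right).trans (Finset.subset_insert _ _))

lemma closed_biUnion (Γ : Finset IPLForm) : Closed (Γ.biUnion subfm) := by
  refine ⟨?_, ?_, ?_⟩ <;> intro a b h <;>
    obtain ⟨ξ, hξ, hmem⟩ := Finset.mem_biUnion.1 h <;>
    have hsub := subfm_subset hmem
  · exact ⟨Finset.mem_biUnion.2 ⟨ξ, hξ, hsub (by simp [subfm, mem_subfm_self])⟩,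
      Finset.mem_biUnion.2 ⟨ξ, hξ, hsub (by simp [subfm, mem_subfm_self])⟩⟩
  · exact ⟨Finset.mem_biUnion.2 ⟨ξ, hξ, hsub (by simp [subfm, mem_subfm_self])⟩,
      Finset.mem_biUnion.2 ⟨ξ, hξ, hsub (by simp [subfm, mem_subfm_self])⟩⟩
  · exact ⟨Finset.mem_biUnion.2 ⟨ξ, hξ, hsub (by simp [subfm, mem_subfm_self])⟩,
      Finset.mem_biUnion.2 ⟨ξ, hξ, hsub (by simp [subfm, mem_subfm_self])⟩⟩

/-- An injective coding of formulas into `ℕ`. -/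
def encF : IPLForm → ℕ
  | .atom n => Nat.pair 0 n
  | .and a b => Nat.pair 1 (Nat.pair (encF a) (encF b))
  | .or a b => Nat.pair 2 (Nat.pair (encF a) (encF b))
  | .imp a b => Nat.pair 3 (Nat.pair (encF a) (encF b))
  | .bot => Nat.pair 4 0

lemma encF_inj : ∀ x y : IPLForm, encF x = encF y → x = y := by
  intro x
  induction x with
  | atom n =>
    intro y h
    cases y <;> simp only [encF, Nat.pair_eq_pair] at h
    · rw [h.2]
    all_goals omega
  | and a b iha ihb =>
    intro y h
    cases y <;> simp only [encF, Nat.pair_eq_pair] at h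
    case and c d => rw [iha c h.2.1, ihb d h.2.2]
    all_goals omega
  | or a b iha ihb =>
    intro y h
    cases y <;> simp only [encF, Nat.pair_eq_pair] at h
    case or c d => rw [iha c h.2.1, ihb d h.2.2]
    all_goals omega
  | imp a b iha ihb =>
    intro y h
    cases y <;> simp only [encF, Nat.pair_eq_pair] at h
    case imp c d => rw [iha c h.2.1, ihb d h.2.2]
    all_goals omega
  | bot =>
    intro y h
    cases y <;> simp only [encF, Nat.pair_eq_pair] at h
    all_goals first | rfl | omega

/-- The atomic image: atoms go to themselves, composite formulas get fresh
atoms above `M`. -/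
def fEnc (M : ℕ) : IPLForm → ℕ
  | .atom n => n
  | ξ => M + encF ξ

lemma fEnc_atom (M n : ℕ) : fEnc M (.atom n) = n := rfl

lemma fEnc_comp (M : ℕ) (ξ : IPLForm) (h : ∀ n, ξ ≠ .atom n) :
    fEnc M ξ = M + encF ξ := by
  cases ξ
  · exact absurd rfl (h _)
  all_goals rfl

lemma fEnc_injOn (sub : Finset IPLForm) (M : ℕ)
    (hM : ∀ n, IPLForm.atom n ∈ sub → n < M) :
    ∀ ξ ∈ sub, ∀ ξ' ∈ sub, fEnc M ξ = fEnc M ξ' → ξ = ξ' := by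
  intro ξ hξ ξ' hξ' heq
  by_cases h1 : ∃ n, ξ = IPLForm.atom n
  · obtain ⟨n, rfl⟩ := h1
    by_cases h2 : ∃ m, ξ' = IPLForm.atom m
    · obtain ⟨m, rfl⟩ := h2
      rw [fEnc_atom, fEnc_atom] at heq
      rw [heq]
    · push_neg at h2
      rw [fEnc_atom, fEnc_comp M ξ' h2] at heq
      have := hM n hξ
      omega
  · push_neg at h1
    by_cases h2 : ∃ m, ξ' = IPLForm.atom m
    · obtain ⟨m, rfl⟩ := h2
      rw [fEnc_comp M ξ h1, fEnc_atom] at heq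
      have := hM m hξ'
      omega
    · push_neg at h2
      rw [fEnc_comp M ξ h1, fEnc_comp M ξ' h2] at heq
      exact encF_inj _ _ (by omega)

open Classical in
/-- Decoding of atoms back to formulas. -/
noncomputable def gDec (sub : Finset IPLForm) (f : IPLForm → ℕ) (q : ℕ) : IPLForm :=
  if h : ∃ ξ ∈ sub, f ξ = q then h.choose else .atom q

lemma gDec_f {sub : Finset IPLForm} {f : IPLForm → ℕ}
    (hinj : ∀ ξ ∈ sub, ∀ ξ' ∈ sub, f ξ = f ξ' → ξ = ξ')
    {ξ : IPLForm} (hξ : ξ ∈ sub) : gDec sub f (f ξ) = ξ := by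
  unfold gDec
  have h : ∃ ξ' ∈ sub, f ξ' = f ξ := ⟨ξ, hξ, rfl⟩
  rw [dif_pos h]
  exact hinj _ h.choose_spec.1 _ hξ h.choose_spec.2

end Encoding
def atomWt : IPLForm → ℕ
  | .atom k => k + 1
  | _ => 0

/-- (Soundness and completeness of the modified base-extension semantics
for IPL) `Γ ⊩* φ` iff `Γ ⊢ φ` in IPL. -/
theorem ipl_modified_soundness_completeness (Γ : Finset IPLForm) (φ : IPLForm) :
    (∀ B : IPLBase, SuppCtx' Γ B φ) ↔ NJ Γ φ := by
  constructor
  · intro h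
    classical
    obtain ⟨sub, hcl, hφ, hΓ⟩ :
        ∃ sub : Finset IPLForm, Closed sub ∧ φ ∈ sub ∧ ∀ ψ ∈ Γ, ψ ∈ sub :=
      ⟨(insert φ Γ).biUnion subfm, closed_biUnion _,
        Finset.mem_biUnion.2 ⟨φ, Finset.mem_insert_self _ _, mem_subfm_self φ⟩,
        fun ψ hψ =>
          Finset.mem_biUnion.2 ⟨ψ, Finset.mem_insert_of_mem hψ, mem_subfm_self ψ⟩⟩
    obtain ⟨M, hM⟩ : ∃ M, ∀ n, IPLForm.atom n ∈ sub → n < M := by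
      refine ⟨sub.sup atomWt + 1, fun n hn => ?_⟩
      have h2 := Finset.le_sup (f := atomWt) hn
      have h3 : n + 1 ≤ sub.sup atomWt := h2
      omega
    have hatom : ∀ n, fEnc M (.atom n) = n := fun n => rfl
    have hinj := fEnc_injOn sub M hM
    have hg : ∀ ξ ∈ sub, gDec sub (fEnc M) (fEnc M ξ) = ξ :=
      fun ξ hξ => gDec_f hinj hξ
    have hC : NBase sub (fEnc M) ⊆ NBase sub (fEnc M) ∪ axSet (Γ.image (fEnc M)) :=
      Set.subset_union_left
    have hsupp : Supp' φ (NBase sub (fEnc M) ∪ axSet (Γ.image (fEnc M))) := by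
      refine h (NBase sub (fEnc M)) _ hC (fun ψ hψ => ?_)
      exact (lemA sub hcl (fEnc M) hatom ψ (hΓ ψ hψ) _ hC).2
        (der_ax (Finset.mem_image_of_mem (fEnc M) hψ))
    have hd := (lemA sub hcl (fEnc M) hatom φ hφ _ hC).1 hsupp
    have hd2 : IPLDer (NBase sub (fEnc M)) (Γ.image (fEnc M)) (fEnc M φ) := by
      have h3 := der_discharge hd
      rwa [Finset.empty_union] at h3
    have hNJ := lemB sub hcl (fEnc M) (gDec sub (fEnc M)) hg hd2
    rw [hg φ hφ, Finset.image_image] at hNJ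
    have himg : Γ.image (gDec sub (fEnc M) ∘ fEnc M) = Γ := by
      have h4 : Γ.image (gDec sub (fEnc M) ∘ fEnc M) = Γ.image id :=
        Finset.image_congr (fun ψ hψ => hg ψ (hΓ ψ (Finset.mem_coe.1 hψ)))
      rw [h4, Finset.image_id]
    rwa [himg] at hNJ
  · intro h B C hBC hΓC
    exact nj_sound h C hΓC
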